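/- Let M be a mean-aggregation GNN with L layers, let A_1,…,A_k be unary predicates and P_1,…,P_j binary predicates (j, k ≥ 0), let a be a constant, let b be a constant with b ≠ a, and let b_1,…,b_j be constants (not necessarily distinct from each other) all distinct from a. Let D_1 = { A_1(a),…,A_k(a), P_1(a,b_1),…,P_j(a,b_j) } and D_base = { A_1(a),…,A_k(a), P_1(a,b),…,P_j(a,b) }. Then for every ℓ ∈ {0,…,L} and every component index i, v^a_ℓ(D_1)[i] = v^a_ℓ(D_base)[i], where v^a_ℓ(D) denotes the layer-ℓ vector that M assigns to a on input D. -/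

import Mathlib

open scoped BigOperators

namespace KG

/-- A fact over a signature with `δ` unary predicates (indexed by `Fin δ`) and
binary predicates indexed by `Col`; constants are natural numbers. -/
inductive Fact (δ : ℕ) (Col : Type) where
  | unary : Fin δ → ℕ → Fact δ Col
  | binary : Col → ℕ → ℕ → Fact δ Col
deriving DecidableEq

/-- A dataset is a finite set of facts. -/
abbrev Dataset (δ : ℕ) (Col : Type) [DecidableEq Col] := Finset (Fact δ Col)

variable {δ : ℕ} {Col : Type} [DecidableEq Col] [Fintype Col]

/-- The (finite) set of constants occurring in a dataset. -/
def conD (D : Dataset δ Col) : Finset ℕ :=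
  D.biUnion fun f =>
    match f with
    | .unary _ a => {a}
    | .binary _ a b => {a, b}

/-- The `P`-successors of `a` in `D`. -/
def nbrs (D : Dataset δ Col) (P : Col) (a : ℕ) : Finset ℕ :=
  (conD D).filter fun d => Fact.binary P a d ∈ D

/-- A mean-aggregation GNN with `L ≥ 1` layers, over the signature with `δ` unary
predicates and binary predicates `Col`.  `dims ℓ` is the dimension of the layer-`ℓ`
vectors, with `dims 0 = dims L = δ`; `A ℓ` and `B P ℓ` are the matrices and `bias ℓ`
the bias vector used to compute the layer-`(ℓ+1)` vectors; `act ℓ` is the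
(monotonically increasing, continuous, non-negatively valued) activation function
applied there, and `t` is the classification threshold. -/
structure GNN (δ : ℕ) (Col : Type) where
  L : ℕ
  hL : 1 ≤ L
  dims : ℕ → ℕ
  dims0 : dims 0 = δ
  dimsL : dims L = δ
  A : (ℓ : ℕ) → Matrix (Fin (dims (ℓ + 1))) (Fin (dims ℓ)) ℝ
  B : Col → (ℓ : ℕ) → Matrix (Fin (dims (ℓ + 1))) (Fin (dims ℓ)) ℝ
  bias : (ℓ : ℕ) → Fin (dims (ℓ + 1)) → ℝ
  act : ℕ → ℝ → ℝ
  act_mono : ∀ ℓ, Monotone (act ℓ)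
  act_cont : ∀ ℓ, Continuous (act ℓ)
  act_nonneg : ∀ ℓ x, 0 ≤ act ℓ x
  t : ℝ

/-- The layer-`ℓ` vector that the GNN `M` assigns to the constant `a` on input
dataset `D`.  The mean of an empty family is the zero vector (`0 / 0 = 0` in `ℝ`). -/
noncomputable def GNN.val (M : GNN δ Col) (D : Dataset δ Col) :
    (ℓ : ℕ) → ℕ → Fin (M.dims ℓ) → ℝ
  | 0, a, i => if Fact.unary (Fin.cast M.dims0 i) a ∈ D then (1 : ℝ) else 0
  | ℓ + 1, a, i =>
      M.act ℓ (M.bias ℓ i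
        + (M.A ℓ).mulVec (fun j => M.val D ℓ a j) i
        + ∑ P : Col, (M.B P ℓ).mulVec
            (fun j => (∑ d ∈ nbrs D P a, M.val D ℓ d j) / ((nbrs D P a).card : ℝ)) i)

/-- The dataset transformation induced by the GNN `M`:
`T_M(D) = { Uᵢ(a) : a ∈ con(D), v^a_L[i] ≥ t }`. -/
def GNN.T (M : GNN δ Col) (D : Dataset δ Col) : Set (Fact δ Col) :=
  { f | ∃ (A : Fin δ) (a : ℕ), f = Fact.unary A a ∧ a ∈ conD D ∧
      M.t ≤ M.val D M.L a (Fin.cast M.dimsL.symm A) }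

/-- A GNN is monotonic (is a MAGNN) if all matrix entries are non-negative. -/
def GNN.Monotonic (M : GNN δ Col) : Prop :=
  (∀ ℓ i j, 0 ≤ M.A ℓ i j) ∧ (∀ P ℓ i j, 0 ≤ M.B P ℓ i j)

/-- Concepts in the syntax `C ::= ⊤ | A | C ⊓ C' | C ⊔ C' | ≥ₙ P.C`
(`∃P.C` is `≥₁ P.C`); ELUQ concepts are those in which every `≥ₙ` has `n ≥ 1`. -/
inductive Concept (δ : ℕ) (Col : Type) where
  | top : Concept δ Col
  | atom : Fin δ → Concept δ Col
  | and : Concept δ Col → Concept δ Col → Concept δ Col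
  | or : Concept δ Col → Concept δ Col → Concept δ Col
  | atLeast : ℕ → Col → Concept δ Col → Concept δ Col
deriving DecidableEq

/-- A concept is a (well-formed) ELUQ concept when every `≥ₙ` has `n` a positive integer. -/
inductive ELUQ : Concept δ Col → Prop
  | top : ELUQ .top
  | atom (A : Fin δ) : ELUQ (.atom A)
  | and {C₁ C₂} : ELUQ C₁ → ELUQ C₂ → ELUQ (.and C₁ C₂)
  | or {C₁ C₂} : ELUQ C₁ → ELUQ C₂ → ELUQ (.or C₁ C₂)
  | atLeast {C} (n : ℕ) (P : Col) (hn : 1 ≤ n) : ELUQ C → ELUQ (.atLeast n P C)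

/-- Satisfaction of a concept by a constant over a dataset. -/
def sat (D : Dataset δ Col) : ℕ → Concept δ Col → Prop
  | _, .top => True
  | c, .atom A => Fact.unary A c ∈ D
  | c, .and C₁ C₂ => sat D c C₁ ∧ sat D c C₂
  | c, .or C₁ C₂ => sat D c C₁ ∨ sat D c C₂
  | c, .atLeast n P C =>
      ∃ S : Finset ℕ, S.card = n ∧ ∀ d ∈ S, Fact.binary P c d ∈ D ∧ sat D d C

/-- A rule `C ⊑ A`. -/
structure Rule (δ : ℕ) (Col : Type) where
  body : Concept δ Col
  head : Fin δ
deriving DecidableEq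

/-- Immediate consequences of a rule on a dataset. -/
def Rule.T (r : Rule δ Col) (D : Dataset δ Col) : Set (Fact δ Col) :=
  { f | ∃ a : ℕ, f = Fact.unary r.head a ∧ a ∈ conD D ∧ sat D a r.body }

/-- A rule is sound for a GNN if its consequences are always among the GNN's. -/
def Sound (r : Rule δ Col) (M : GNN δ Col) : Prop :=
  ∀ D : Dataset δ Col, r.T D ⊆ M.T D


/-- The dataset `{ A₁(a),…,A_k(a) } ∪ { P(a,b) : (P,b) ∈ ps }`. -/
def mkD (As : List (Fin δ)) (a : ℕ) (ps : List (Col × ℕ)) : Dataset δ Col :=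
  (As.map fun A => Fact.unary A a).toFinset ∪
    (ps.map fun q => Fact.binary q.1 a q.2).toFinset

lemma mem_mkD_unary {As : List (Fin δ)} {a : ℕ} {ps : List (Col × ℕ)}
    {A : Fin δ} {c : ℕ} :
    Fact.unary A c ∈ mkD As a ps ↔ A ∈ As ∧ c = a := by
  simp only [mkD, Finset.mem_union, List.mem_toFinset, List.mem_map]
  constructor
  · rintro (⟨A', hA', h⟩ | ⟨q, _, h⟩)
    · cases h; exact ⟨hA', rfl⟩
    · cases h
  · rintro ⟨hA, rfl⟩; exact Or.inl ⟨A, hA, rfl⟩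

lemma mem_mkD_binary {As : List (Fin δ)} {a : ℕ} {ps : List (Col × ℕ)}
    {P : Col} {c d : ℕ} :
    Fact.binary P c d ∈ mkD As a ps ↔ c = a ∧ (P, d) ∈ ps := by
  simp only [mkD, Finset.mem_union, List.mem_toFinset, List.mem_map]
  constructor
  · rintro (⟨A', _, h⟩ | ⟨⟨P', d'⟩, hq, h⟩)
    · cases h
    · cases h; exact ⟨rfl, hq⟩
  · rintro ⟨rfl, hq⟩; exact Or.inr ⟨(P, d), hq, rfl⟩

lemma mem_nbrs_mkD {As : List (Fin δ)} {a : ℕ} {ps : List (Col × ℕ)}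
    {P : Col} {d : ℕ} :
    d ∈ nbrs (mkD As a ps) P a ↔ (P, d) ∈ ps := by
  simp only [nbrs, Finset.mem_filter, mem_mkD_binary]
  constructor
  · rintro ⟨_, _, h⟩; exact h
  · intro h
    refine ⟨?_, trivial, h⟩
    simp only [conD, Finset.mem_biUnion]
    exact ⟨Fact.binary P a d, mem_mkD_binary.mpr ⟨rfl, h⟩, by simp⟩

lemma nbrs_mkD_ne {As : List (Fin δ)} {a : ℕ} {ps : List (Col × ℕ)}
    {P : Col} {c : ℕ} (hc : c ≠ a) :
    nbrs (mkD As a ps) P c = ∅ := by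
  ext d
  simp only [nbrs, Finset.mem_filter, mem_mkD_binary, Finset.notMem_empty,
    iff_false]
  rintro ⟨_, rfl, _⟩
  exact hc rfl

/-- The value that any constant other than `a` gets at layer `ℓ` in a star
dataset centred at `a`; it does not depend on the dataset. -/
noncomputable def baseVec (M : GNN δ Col) : (ℓ : ℕ) → Fin (M.dims ℓ) → ℝ
  | 0, _ => 0
  | ℓ + 1, i => M.act ℓ (M.bias ℓ i + (M.A ℓ).mulVec (baseVec M ℓ) i)

lemma val_ne_eq_baseVec (M : GNN δ Col) (As : List (Fin δ)) (a : ℕ)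
    (ps : List (Col × ℕ)) {c : ℕ} (hc : c ≠ a) :
    ∀ (ℓ : ℕ) (i : Fin (M.dims ℓ)),
      M.val (mkD As a ps) ℓ c i = baseVec M ℓ i := by
  intro ℓ
  induction ℓ with
  | zero =>
    intro i
    simp only [GNN.val, baseVec]
    rw [if_neg]
    intro h
    exact hc (mem_mkD_unary.mp h).2
  | succ ℓ ih =>
    intro i
    simp only [GNN.val, baseVec]
    congr 1
    have hnb : ∀ P : Col, nbrs (mkD As a ps) P c = ∅ := fun P => nbrs_mkD_ne hc
    have h3 : ∀ P : Col,
        (M.B P ℓ).mulVec (fun j =>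
          (∑ d ∈ nbrs (mkD As a ps) P c, M.val (mkD As a ps) ℓ d j) /
            ((nbrs (mkD As a ps) P c).card : ℝ)) i = 0 := by
      intro P
      have : (fun j : Fin (M.dims ℓ) =>
          (∑ d ∈ nbrs (mkD As a ps) P c, M.val (mkD As a ps) ℓ d j) /
            ((nbrs (mkD As a ps) P c).card : ℝ)) = 0 := by
        funext j
        simp [hnb P]
      rw [this, Matrix.mulVec_zero]; rfl
    have h2 : (M.A ℓ).mulVec (fun j => M.val (mkD As a ps) ℓ c j) i
        = (M.A ℓ).mulVec (baseVec M ℓ) i := by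
      congr 1
      funext j
      exact ih j
    rw [h2, Finset.sum_congr rfl (fun P _ => h3 P)]
    simp

lemma mean_eq (M : GNN δ Col) (As : List (Fin δ)) (a : ℕ)
    (ps : List (Col × ℕ)) (ha : ∀ q ∈ ps, q.2 ≠ a) (P : Col)
    (ℓ : ℕ) (j : Fin (M.dims ℓ)) :
    (∑ d ∈ nbrs (mkD As a ps) P a, M.val (mkD As a ps) ℓ d j) /
        ((nbrs (mkD As a ps) P a).card : ℝ)
      = if P ∈ ps.map Prod.fst then baseVec M ℓ j else 0 := by
  set S := nbrs (mkD As a ps) P a with hS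
  have hval : ∀ d ∈ S, M.val (mkD As a ps) ℓ d j = baseVec M ℓ j := by
    intro d hd
    have hd' : (P, d) ∈ ps := mem_nbrs_mkD.mp hd
    exact val_ne_eq_baseVec M As a ps (ha (P, d) hd') ℓ j
  have hsum : (∑ d ∈ S, M.val (mkD As a ps) ℓ d j)
      = (S.card : ℝ) * baseVec M ℓ j := by
    rw [Finset.sum_congr rfl hval, Finset.sum_const, nsmul_eq_mul]
  rw [hsum]
  have hne : P ∈ ps.map Prod.fst ↔ S.Nonempty := by
    simp only [List.mem_map, hS]
    constructor
    · rintro ⟨⟨P', d⟩, hq, rfl⟩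
      exact ⟨d, mem_nbrs_mkD.mpr hq⟩
    · rintro ⟨d, hd⟩
      exact ⟨(P, d), mem_nbrs_mkD.mp hd, rfl⟩
  by_cases hP : P ∈ ps.map Prod.fst
  · rw [if_pos hP]
    have hcard : (S.card : ℝ) ≠ 0 := by
      have h := Finset.card_pos.mpr (hne.mp hP)
      exact_mod_cast h.ne'
    exact mul_div_cancel_left₀ _ hcard
  · rw [if_neg hP]
    have : S = ∅ := by
      rw [← Finset.not_nonempty_iff_eq_empty]
      exact fun h => hP (hne.mpr h)
    simp [this]

/-- For a mean-aggregation GNN `M` with `L` layers, constants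
`b ≠ a` and `b₁,…,bⱼ` (not necessarily distinct from each other) all distinct
from `a`, the datasets `D₁ = { A₁(a),…,A_k(a), P₁(a,b₁),…,Pⱼ(a,bⱼ) }` and
`D_base = { A₁(a),…,A_k(a), P₁(a,b),…,Pⱼ(a,b) }` give `a` the same vector at
every layer `ℓ ∈ {0,…,L}`. -/
theorem split_eq (M : GNN δ Col) (As : List (Fin δ)) (Ps : List Col)
    (a b : ℕ) (hb : b ≠ a) (bs : List ℕ) (hlen : bs.length = Ps.length)
    (hbs : ∀ x ∈ bs, x ≠ a)
    (ℓ : ℕ) (hℓ : ℓ ≤ M.L) (i : Fin (M.dims ℓ)) :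
    M.val (mkD As a (Ps.zip bs)) ℓ a i =
      M.val (mkD As a (Ps.map fun P => (P, b))) ℓ a i := by
  clear hℓ
  induction ℓ with
  | zero =>
    simp only [GNN.val]
    by_cases h : (Fin.cast M.dims0 i) ∈ As
    · rw [if_pos (mem_mkD_unary.mpr ⟨h, rfl⟩), if_pos (mem_mkD_unary.mpr ⟨h, rfl⟩)]
    · rw [if_neg, if_neg] <;> exact fun hmem => h (mem_mkD_unary.mp hmem).1
  | succ ℓ ih =>
    simp only [GNN.val]
    congr 1
    have ha₁ : ∀ q ∈ Ps.zip bs, q.2 ≠ a := by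
      intro q hq
      exact hbs q.2 (List.of_mem_zip hq).2
    have ha₂ : ∀ q ∈ Ps.map fun P => (P, b), q.2 ≠ a := by
      intro q hq
      obtain ⟨P, _, rfl⟩ := List.mem_map.mp hq
      exact hb
    have hfst₁ : (Ps.zip bs).map Prod.fst = Ps :=
      List.map_fst_zip (le_of_eq hlen.symm)
    have hfst₂ : (Ps.map fun P => (P, b)).map Prod.fst = Ps := by
      simp [Function.comp_def, List.map_map]
    have h2 : (M.A ℓ).mulVec (fun j => M.val (mkD As a (Ps.zip bs)) ℓ a j) i
        = (M.A ℓ).mulVec (fun j => M.val (mkD As a (Ps.map fun P => (P, b))) ℓ a j) i := by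
      congr 1; funext j; exact ih j
    have h3 : ∀ P : Col,
        (M.B P ℓ).mulVec (fun j =>
          (∑ d ∈ nbrs (mkD As a (Ps.zip bs)) P a,
              M.val (mkD As a (Ps.zip bs)) ℓ d j) /
            ((nbrs (mkD As a (Ps.zip bs)) P a).card : ℝ)) i
        = (M.B P ℓ).mulVec (fun j =>
          (∑ d ∈ nbrs (mkD As a (Ps.map fun P => (P, b))) P a,
              M.val (mkD As a (Ps.map fun P => (P, b))) ℓ d j) /
            ((nbrs (mkD As a (Ps.map fun P => (P, b))) P a).card : ℝ)) i := by
      intro P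
      congr 1
      funext j
      rw [mean_eq M As a _ ha₁ P ℓ j, mean_eq M As a _ ha₂ P ℓ j, hfst₁, hfst₂]
    rw [h2, Finset.sum_congr rfl (fun P _ => h3 P)]

end KG
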